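/- arXiv:2403.19097 — 2 statements merged into one kernel-verified Lean document; each statement's English description precedes it below -/
import Mathlib

section
/- In the finite setting, d_{TpOT,p} satisfies the triangle inequality: for three finite measure topological networks P₁, P₂, P₃, d_{TpOT,p}(P₁, P₃) ≤ d_{TpOT,p}(P₁, P₂) + d_{TpOT,p}(P₂, P₃). -/
open Finset

/-- A finite measure topological network `P = ((X, k, μ), (Y, ι, ν), ω)`. -/
structure FinTopNet where
  X : Type
  Y : Type
  [finX : Fintype X]
  [finY : Fintype Y]
  k : X → X → ℝ
  μ : X → ℝ
  ι : Y → ℝ × ℝ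
  ν : Y → ℝ
  ω : X → Y → ℝ

attribute [instance] FinTopNet.finX FinTopNet.finY

/-- ℓᵖ distance on ℝ², raised to the power `p`. -/
noncomputable def lpp (p : ℝ) (a b : ℝ × ℝ) : ℝ := |a.1 - b.1| ^ p + |a.2 - b.2| ^ p

/-- Projection of a point of ℝ² onto the diagonal. -/
noncomputable def diagProj (a : ℝ × ℝ) : ℝ × ℝ := ((a.1 + a.2) / 2, (a.1 + a.2) / 2)

/-- Cost (to the power `p`) between augmented persistence-diagram points: the virtual
point `∂` (encoded by `none`) acts as the diagonal projection of the other point. -/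
noncomputable def pdCost {Y Y' : Type*} (p : ℝ) (ι : Y → ℝ × ℝ) (ι' : Y' → ℝ × ℝ) :
    Option Y → Option Y' → ℝ
  | some y, some y' => lpp p (ι y) (ι' y')
  | some y, none => lpp p (ι y) (diagProj (ι y))
  | none, some y' => lpp p (diagProj (ι' y')) (ι' y')
  | none, none => 0

/-- Extension of `ω` to the augmented set `Ȳ = Y ∪ {∂}` by `ω(·, ∂) = 0`. -/
def ωbar {X Y : Type*} (ω : X → Y → ℝ) : X → Option Y → ℝ := fun x oy =>
  match oy with
  | some y => ω x y
  | none => 0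

/-- Couplings of finitely supported measures. -/
def IsCoupling {A B : Type*} [Fintype A] [Fintype B]
    (μ : A → ℝ) (μ' : B → ℝ) (π : A → B → ℝ) : Prop :=
  (∀ a b, 0 ≤ π a b) ∧ (∀ a, ∑ b, π a b = μ a) ∧ (∀ b, ∑ a, π a b = μ' b)

/-- Admissible couplings between measures `ν, ν'` on the augmented sets: marginals are
`ν, ν'` on `Y, Y'` and no mass is put on `(∂, ∂)`. -/
def IsAdmissible {Y Y' : Type*} [Fintype Y] [Fintype Y'] (ν : Y → ℝ) (ν' : Y' → ℝ)
    (π : Option Y → Option Y' → ℝ) : Prop :=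
  (∀ a b, 0 ≤ π a b) ∧ (∀ y : Y, ∑ y' : Option Y', π (some y) y' = ν y) ∧
    (∀ y' : Y', ∑ y : Option Y, π y (some y') = ν' y') ∧ π none none = 0

/-- The TpOT objective (before the `1/p` power): persistence-diagram transport term,
Gromov–Wasserstein term, and co-optimal transport term. -/
noncomputable def tpotObj (p : ℝ) (P P' : FinTopNet) (πv : P.X → P'.X → ℝ)
    (πe : Option P.Y → Option P'.Y → ℝ) : ℝ :=
  (∑ y : Option P.Y, ∑ y' : Option P'.Y, pdCost p P.ι P'.ι y y' * πe y y') +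
  (∑ x₁, ∑ x₁', ∑ x₂, ∑ x₂',
      |P.k x₁ x₂ - P'.k x₁' x₂'| ^ p * πv x₁ x₁' * πv x₂ x₂') +
  (∑ x, ∑ x', ∑ y : Option P.Y, ∑ y' : Option P'.Y,
      |ωbar P.ω x y - ωbar P'.ω x' y'| ^ p * πv x x' * πe y y')

/-- The Topological Optimal Transport cost `d_{TpOT,p}`. -/
noncomputable def dTpOT (p : ℝ) (P P' : FinTopNet) : ℝ :=
  sInf {r | ∃ πv : P.X → P'.X → ℝ, ∃ πe : Option P.Y → Option P'.Y → ℝ,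
    IsCoupling P.μ P'.μ πv ∧ IsAdmissible P.ν P'.ν πe ∧
    r = (tpotObj p P P' πv πe) ^ (1 / p)}

/-- Validity: `k` symmetric, `μ` a fully supported probability measure, `ν` fully
supported. -/
def FinTopNet.Valid (P : FinTopNet) : Prop :=
  (∀ x y, P.k x y = P.k y x) ∧ (∀ x, 0 < P.μ x) ∧ (∑ x, P.μ x = 1) ∧ (∀ y, 0 < P.ν y)


/-! Glue the two pairs of plans through the middle network: couplings of `μ₁, μ₂` and
`μ₂, μ₃` glue to a plan on `X₁ × X₂ × X₃` in the usual way, and admissible couplings glue the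
same way on `Ȳ₁ × Ȳ₂ × Ȳ₃` once the mass on `∂ → y → ∂` is discarded. Under the glued plans
each of the three terms of the objective is the `p`-th power of a weighted `ℓᵖ` norm of a
difference that splits through the middle network (for the diagram term after realizing `∂`
by diagonal projections, which are the `ℓᵖ`-nearest diagonal points), so Minkowski's
inequality gives a triangle inequality for each term, and Minkowski's inequality in `ℓᵖ(ℝ³)`
combines the three. Taking infima over the plans finishes the proof. -/

section Minkowski

variable {ι : Type*} {p : ℝ}

theorem weighted_Lp_add_le [Fintype ι] (hp : 1 ≤ p) (w f g : ι → ℝ) (hw : ∀ i, 0 ≤ w i) :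
    (∑ i, w i * |f i + g i| ^ p) ^ (1 / p) ≤
      (∑ i, w i * |f i| ^ p) ^ (1 / p) + (∑ i, w i * |g i| ^ p) ^ (1 / p) := by
  have hw' : ∀ i (x : ℝ), |w i ^ (1 / p) * x| ^ p = w i * |x| ^ p := fun i x => by
    rw [abs_mul, abs_of_nonneg (Real.rpow_nonneg (hw i) _),
      Real.mul_rpow (Real.rpow_nonneg (hw i) _) (abs_nonneg _), ← Real.rpow_mul (hw i),
      one_div_mul_cancel (by linarith), Real.rpow_one]
  simpa only [← mul_add, hw'] using
    Real.Lp_add_le univ (fun i => w i ^ (1 / p) * f i) (fun i => w i ^ (1 / p) * g i) hp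

theorem rpow_one_div_sum_le_add_of_forall_le (hp : 1 ≤ p) (s : Finset ι) {a b c : ι → ℝ}
    (ha : ∀ i ∈ s, 0 ≤ a i) (hb : ∀ i ∈ s, 0 ≤ b i) (hc : ∀ i ∈ s, 0 ≤ c i)
    (h : ∀ i ∈ s, c i ^ (1 / p) ≤ a i ^ (1 / p) + b i ^ (1 / p)) :
    (∑ i ∈ s, c i) ^ (1 / p) ≤ (∑ i ∈ s, a i) ^ (1 / p) + (∑ i ∈ s, b i) ^ (1 / p) := by
  have hpow : ∀ x : ℝ, 0 ≤ x → (x ^ (1 / p)) ^ p = x := fun x hx => by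
    rw [← Real.rpow_mul hx, one_div_mul_cancel (by linarith), Real.rpow_one]
  calc (∑ i ∈ s, c i) ^ (1 / p)
      ≤ (∑ i ∈ s, (a i ^ (1 / p) + b i ^ (1 / p)) ^ p) ^ (1 / p) := by
        gcongr with i hi
        · exact sum_nonneg hc
        · rw [← hpow (c i) (hc i hi)]
          exact Real.rpow_le_rpow (Real.rpow_nonneg (hc i hi) _) (h i hi) (by linarith)
    _ ≤ (∑ i ∈ s, (a i ^ (1 / p)) ^ p) ^ (1 / p) + (∑ i ∈ s, (b i ^ (1 / p)) ^ p) ^ (1 / p) :=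
        Real.Lp_add_le_of_nonneg s hp (fun i hi => Real.rpow_nonneg (ha i hi) _)
          (fun i hi => Real.rpow_nonneg (hb i hi) _)
    _ = (∑ i ∈ s, a i) ^ (1 / p) + (∑ i ∈ s, b i) ^ (1 / p) := by
        rw [sum_congr rfl fun i hi => hpow _ (ha i hi), sum_congr rfl fun i hi => hpow _ (hb i hi)]

end Minkowski

section Lpp

variable {p : ℝ}

lemma lpp_nonneg (p : ℝ) (a b : ℝ × ℝ) : 0 ≤ lpp p a b := by
  unfold lpp
  positivity

lemma lpp_self (hp : p ≠ 0) (a : ℝ × ℝ) : lpp p a a = 0 := by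
  simp [lpp, Real.zero_rpow hp]

lemma lpp_comm (p : ℝ) (a b : ℝ × ℝ) : lpp p a b = lpp p b a := by
  simp only [lpp, abs_sub_comm]

lemma lpp_diagProj_le (hp : 1 ≤ p) (a b : ℝ × ℝ) :
    lpp p a (diagProj a) ≤ lpp p a (diagProj b) := by
  set t := (b.1 + b.2) / 2
  have hdist : |a.1 - a.2| / 2 ≤ (1 / 2 : ℝ) • |a.1 - t| + (1 / 2 : ℝ) • |a.2 - t| := by
    have := abs_sub_le a.1 t a.2
    rw [abs_sub_comm t] at this
    simp only [smul_eq_mul]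
    linarith
  have hconv := (convexOn_rpow hp).2 (abs_nonneg (a.1 - t)) (abs_nonneg (a.2 - t))
    (by norm_num : (0 : ℝ) ≤ 1 / 2) (by norm_num : (0 : ℝ) ≤ 1 / 2) (by norm_num)
  have hself : lpp p a (diagProj a) = 2 * (|a.1 - a.2| / 2) ^ p := by
    have h₁ : a.1 - (a.1 + a.2) / 2 = (a.1 - a.2) / 2 := by ring
    have h₂ : a.2 - (a.1 + a.2) / 2 = -((a.1 - a.2) / 2) := by ring
    simp only [lpp, diagProj, h₁, h₂, abs_neg, abs_div, abs_two]
    ring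
  rw [hself]
  simp only [smul_eq_mul] at hconv hdist
  calc 2 * (|a.1 - a.2| / 2) ^ p ≤ 2 * (1 / 2 * |a.1 - t| + 1 / 2 * |a.2 - t|) ^ p := by
        gcongr
    _ ≤ lpp p a (diagProj b) := by
        simp only [lpp, diagProj]
        linarith

theorem weighted_lpp_triangle {ι : Type*} [Fintype ι] (hp : 1 ≤ p) (w : ι → ℝ)
    (hw : ∀ i, 0 ≤ w i) (a b c : ι → ℝ × ℝ) :
    (∑ i, w i * lpp p (a i) (c i)) ^ (1 / p) ≤
      (∑ i, w i * lpp p (a i) (b i)) ^ (1 / p) + (∑ i, w i * lpp p (b i) (c i)) ^ (1 / p) := by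
  -- one copy of `ι` for each coordinate of `ℝ × ℝ`
  have hsplit : ∀ x y : ι → ℝ × ℝ, ∑ i, w i * lpp p (x i) (y i) =
      ∑ j : ι ⊕ ι, Sum.elim w w j *
        |Sum.elim (fun i => (x i).1 - (y i).1) (fun i => (x i).2 - (y i).2) j| ^ p :=
    fun x y => by
      simp only [Fintype.sum_sum_type, Sum.elim_inl, Sum.elim_inr, lpp, mul_add, sum_add_distrib]
  rw [hsplit a c, hsplit a b, hsplit b c]
  refine (le_of_eq ?_).trans (weighted_Lp_add_le hp (Sum.elim w w) _ _ ?_)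
  · refine congrArg (· ^ (1 / p)) (sum_congr rfl ?_)
    rintro (i | i) - <;> simp
  · rintro (i | i) <;> exact hw i

end Lpp

section PdRealize

variable {Y₁ Y₂ Y₃ : Type*} (ι₁ : Y₁ → ℝ × ℝ) (ι₂ : Y₂ → ℝ × ℝ) (ι₃ : Y₃ → ℝ × ℝ) {p : ℝ}

/-- Points of `ℝ²` realizing a triple of augmented diagram points: `∂` becomes the diagonal
projection of a neighbouring point, so that consecutive `lpp` costs are `pdCost`s. -/
noncomputable def pdRealize :
    Option Y₁ → Option Y₂ → Option Y₃ → (ℝ × ℝ) × (ℝ × ℝ) × (ℝ × ℝ)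
  | some a, some b, some c => (ι₁ a, ι₂ b, ι₃ c)
  | some a, some b, none => (ι₁ a, ι₂ b, diagProj (ι₂ b))
  | none, some b, some c => (diagProj (ι₂ b), ι₂ b, ι₃ c)
  | none, some b, none => (diagProj (ι₂ b), ι₂ b, diagProj (ι₂ b))
  | some a, none, none => (ι₁ a, diagProj (ι₁ a), diagProj (ι₁ a))
  | none, none, some c => (diagProj (ι₃ c), diagProj (ι₃ c), ι₃ c)
  | some a, none, some c => (ι₁ a, diagProj (ι₁ a), ι₃ c)
  | none, none, none => (0, 0, 0)

lemma lpp_pdRealize_fst_snd (hp : p ≠ 0) (a : Option Y₁) (b : Option Y₂) (c : Option Y₃) :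
    lpp p (pdRealize ι₁ ι₂ ι₃ a b c).1 (pdRealize ι₁ ι₂ ι₃ a b c).2.1 = pdCost p ι₁ ι₂ a b := by
  rcases a with _ | a <;> rcases b with _ | b <;> rcases c with _ | c <;>
    simp [pdRealize, pdCost, lpp_self hp]

lemma lpp_pdRealize_snd_thd (hp : p ≠ 0) {a : Option Y₁} {b : Option Y₂} {c : Option Y₃}
    (h : ¬(a ≠ none ∧ b = none ∧ c ≠ none)) :
    lpp p (pdRealize ι₁ ι₂ ι₃ a b c).2.1 (pdRealize ι₁ ι₂ ι₃ a b c).2.2 = pdCost p ι₂ ι₃ b c := by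
  rcases a with _ | a <;> rcases b with _ | b <;> rcases c with _ | c <;>
    simp_all [pdRealize, pdCost, lpp_self hp]

lemma pdCost_le_lpp_pdRealize (hp : 1 ≤ p) (a : Option Y₁) (b : Option Y₂) (c : Option Y₃) :
    pdCost p ι₁ ι₃ a c ≤ lpp p (pdRealize ι₁ ι₂ ι₃ a b c).1 (pdRealize ι₁ ι₂ ι₃ a b c).2.2 := by
  rcases a with _ | a <;> rcases b with _ | b <;> rcases c with _ | c <;>
    simp only [pdRealize, pdCost, le_refl]
  all_goals first
    | exact lpp_nonneg _ _ _
    | exact lpp_diagProj_le hp _ _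
    | (rw [lpp_comm p (diagProj _), lpp_comm p (diagProj _)]; exact lpp_diagProj_le hp _ _)

end PdRealize

lemma pdCost_nonneg {Y Y' : Type*} (p : ℝ) (ι : Y → ℝ × ℝ) (ι' : Y' → ℝ × ℝ) (y : Option Y)
    (y' : Option Y') : 0 ≤ pdCost p ι ι' y y' := by
  rcases y with _ | y <;> rcases y' with _ | y' <;> first | exact le_rfl | exact lpp_nonneg _ _ _

section Terms

variable {X X' Y Y' : Type*} [Fintype X] [Fintype X'] [Fintype Y] [Fintype Y'] (p : ℝ)

noncomputable def pdTerm (ι : Y → ℝ × ℝ) (ι' : Y' → ℝ × ℝ) (πe : Option Y → Option Y' → ℝ) : ℝ :=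
  ∑ y, ∑ y', pdCost p ι ι' y y' * πe y y'

noncomputable def gwTerm (k : X → X → ℝ) (k' : X' → X' → ℝ) (πv : X → X' → ℝ) : ℝ :=
  ∑ x₁, ∑ x₁', ∑ x₂, ∑ x₂', |k x₁ x₂ - k' x₁' x₂'| ^ p * πv x₁ x₁' * πv x₂ x₂'

noncomputable def coTerm (ω : X → Y → ℝ) (ω' : X' → Y' → ℝ) (πv : X → X' → ℝ)
    (πe : Option Y → Option Y' → ℝ) : ℝ :=
  ∑ x, ∑ x', ∑ y, ∑ y', |ωbar ω x y - ωbar ω' x' y'| ^ p * πv x x' * πe y y'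

lemma tpotObj_eq (P P' : FinTopNet) (πv : P.X → P'.X → ℝ) (πe : Option P.Y → Option P'.Y → ℝ) :
    tpotObj p P P' πv πe =
      pdTerm p P.ι P'.ι πe + gwTerm p P.k P'.k πv + coTerm p P.ω P'.ω πv πe :=
  rfl

lemma gwTerm_eq (k : X → X → ℝ) (k' : X' → X' → ℝ) (πv : X → X' → ℝ) :
    gwTerm p k k' πv = ∑ x₁, ∑ x₁', πv x₁ x₁' *
      ∑ x₂, ∑ x₂', πv x₂ x₂' * |k x₁ x₂ - k' x₁' x₂'| ^ p := by
  simp only [gwTerm, mul_sum]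
  exact sum_congr rfl fun _ _ => sum_congr rfl fun _ _ =>
    sum_congr rfl fun _ _ => sum_congr rfl fun _ _ => by ring

lemma coTerm_eq (ω : X → Y → ℝ) (ω' : X' → Y' → ℝ) (πv : X → X' → ℝ)
    (πe : Option Y → Option Y' → ℝ) :
    coTerm p ω ω' πv πe = ∑ x, ∑ x', πv x x' *
      ∑ y, ∑ y', πe y y' * |ωbar ω x y - ωbar ω' x' y'| ^ p := by
  simp only [coTerm, mul_sum]
  exact sum_congr rfl fun _ _ => sum_congr rfl fun _ _ =>
    sum_congr rfl fun _ _ => sum_congr rfl fun _ _ => by ring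

variable {p}

lemma pdTerm_nonneg (ι : Y → ℝ × ℝ) (ι' : Y' → ℝ × ℝ) {πe : Option Y → Option Y' → ℝ}
    (he : ∀ y y', 0 ≤ πe y y') : 0 ≤ pdTerm p ι ι' πe :=
  sum_nonneg fun y _ => sum_nonneg fun y' _ => mul_nonneg (pdCost_nonneg p ι ι' y y') (he y y')

lemma gwTerm_nonneg (k : X → X → ℝ) (k' : X' → X' → ℝ) {πv : X → X' → ℝ}
    (hv : ∀ x x', 0 ≤ πv x x') : 0 ≤ gwTerm p k k' πv := by
  unfold gwTerm
  refine sum_nonneg fun _ _ => sum_nonneg fun _ _ => sum_nonneg fun _ _ => sum_nonneg fun _ _ => ?_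
  exact mul_nonneg (mul_nonneg (Real.rpow_nonneg (abs_nonneg _) _) (hv _ _)) (hv _ _)

lemma coTerm_nonneg (ω : X → Y → ℝ) (ω' : X' → Y' → ℝ) {πv : X → X' → ℝ}
    {πe : Option Y → Option Y' → ℝ} (hv : ∀ x x', 0 ≤ πv x x') (he : ∀ y y', 0 ≤ πe y y') :
    0 ≤ coTerm p ω ω' πv πe := by
  unfold coTerm
  refine sum_nonneg fun _ _ => sum_nonneg fun _ _ => sum_nonneg fun _ _ => sum_nonneg fun _ _ => ?_
  exact mul_nonneg (mul_nonneg (Real.rpow_nonneg (abs_nonneg _) _) (hv _ _)) (he _ _)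

lemma tpotObj_nonneg (P P' : FinTopNet) {πv : P.X → P'.X → ℝ}
    {πe : Option P.Y → Option P'.Y → ℝ} (hv : ∀ x x', 0 ≤ πv x x') (he : ∀ y y', 0 ≤ πe y y') :
    0 ≤ tpotObj p P P' πv πe := by
  rw [tpotObj_eq]
  have := pdTerm_nonneg P.ι P'.ι (p := p) he
  have := gwTerm_nonneg P.k P'.k (p := p) hv
  have := coTerm_nonneg P.ω P'.ω (p := p) hv he
  linarith

end Terms

section ThreePlans

variable {A B C : Type*} [Fintype A] [Fintype B] [Fintype C]

lemma sum_triple_mul_left (G : A → B → C → ℝ) (F : A → B → ℝ) :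
    ∑ t : A × B × C, G t.1 t.2.1 t.2.2 * F t.1 t.2.1 = ∑ a, ∑ b, (∑ c, G a b c) * F a b := by
  simp only [Fintype.sum_prod_type, sum_mul]

lemma sum_triple_mul_right (G : A → B → C → ℝ) (F : B → C → ℝ) :
    ∑ t : A × B × C, G t.1 t.2.1 t.2.2 * F t.2.1 t.2.2 = ∑ b, ∑ c, (∑ a, G a b c) * F b c := by
  simp only [Fintype.sum_prod_type, sum_mul]
  rw [sum_comm]
  exact sum_congr rfl fun _ _ => sum_comm

lemma sum_triple_mul_outer (G : A → B → C → ℝ) (F : A → C → ℝ) :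
    ∑ t : A × B × C, G t.1 t.2.1 t.2.2 * F t.1 t.2.2 = ∑ a, ∑ c, (∑ b, G a b c) * F a c := by
  simp only [Fintype.sum_prod_type, sum_mul]
  exact sum_congr rfl fun _ _ => sum_comm

structure IsGluing (π₁₂ : A → B → ℝ) (π₂₃ : B → C → ℝ) (G : A → B → C → ℝ) : Prop where
  nonneg : ∀ a b c, 0 ≤ G a b c
  sum_right : ∀ a b, ∑ c, G a b c = π₁₂ a b
  sum_left : ∀ b c, ∑ a, G a b c = π₂₃ b c

/-- Admissible couplings glue only approximately: mass on a path `∂ → b → ∂` has to be dropped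
(it would land on `(∂, ∂)`), so the marginals are only bounded by `π₁₂` and `π₂₃` away from
`(∂, ∂)`; paths `a → ∂ → c` are excluded because the diagram cost does not split along them. -/
structure IsAdmissibleGluing (π₁₂ : Option A → Option B → ℝ) (π₂₃ : Option B → Option C → ℝ)
    (H : Option A → Option B → Option C → ℝ) : Prop where
  nonneg : ∀ a b c, 0 ≤ H a b c
  sum_right_le : ∀ a b, ¬(a = none ∧ b = none) → ∑ c, H a b c ≤ π₁₂ a b
  sum_left_le : ∀ b c, ¬(b = none ∧ c = none) → ∑ a, H a b c ≤ π₂₃ b c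
  some_none_some : ∀ a c, H (some a) none (some c) = 0

namespace IsGluing

variable {π₁₂ : A → B → ℝ} {π₂₃ : B → C → ℝ} {G : A → B → C → ℝ}

lemma sum_mul_left (hG : IsGluing π₁₂ π₂₃ G) (F : A → B → ℝ) :
    ∑ t : A × B × C, G t.1 t.2.1 t.2.2 * F t.1 t.2.1 = ∑ a, ∑ b, π₁₂ a b * F a b := by
  simp only [sum_triple_mul_left, hG.sum_right]

lemma sum_mul_right (hG : IsGluing π₁₂ π₂₃ G) (F : B → C → ℝ) :
    ∑ t : A × B × C, G t.1 t.2.1 t.2.2 * F t.2.1 t.2.2 = ∑ b, ∑ c, π₂₃ b c * F b c := by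
  simp only [sum_triple_mul_right, hG.sum_left]

lemma isCoupling {μ₁ : A → ℝ} {μ₂ : B → ℝ} {μ₃ : C → ℝ} (hG : IsGluing π₁₂ π₂₃ G)
    (h₁₂ : IsCoupling μ₁ μ₂ π₁₂) (h₂₃ : IsCoupling μ₂ μ₃ π₂₃) :
    IsCoupling μ₁ μ₃ (fun a c => ∑ b, G a b c) := by
  refine ⟨fun a c => sum_nonneg fun b _ => hG.nonneg a b c, fun a => ?_, fun c => ?_⟩
  · rw [sum_comm, ← h₁₂.2.1 a]
    exact sum_congr rfl fun b _ => hG.sum_right a b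
  · rw [sum_comm, ← h₂₃.2.2 c]
    exact sum_congr rfl fun b _ => hG.sum_left b c

end IsGluing

namespace IsAdmissibleGluing

variable {π₁₂ : Option A → Option B → ℝ} {π₂₃ : Option B → Option C → ℝ}
  {H : Option A → Option B → Option C → ℝ}

lemma sum_mul_left_le (hH : IsAdmissibleGluing π₁₂ π₂₃ H) (F : Option A → Option B → ℝ)
    (hF : ∀ a b, 0 ≤ F a b) (hF₀ : F none none = 0) :
    ∑ t : Option A × Option B × Option C, H t.1 t.2.1 t.2.2 * F t.1 t.2.1 ≤
      ∑ a, ∑ b, π₁₂ a b * F a b := by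
  rw [sum_triple_mul_left]
  refine sum_le_sum fun a _ => sum_le_sum fun b _ => ?_
  by_cases hab : a = none ∧ b = none
  · simp [hab.1, hab.2, hF₀]
  · exact mul_le_mul_of_nonneg_right (hH.sum_right_le a b hab) (hF a b)

lemma sum_mul_right_le (hH : IsAdmissibleGluing π₁₂ π₂₃ H) (F : Option B → Option C → ℝ)
    (hF : ∀ b c, 0 ≤ F b c) (hF₀ : F none none = 0) :
    ∑ t : Option A × Option B × Option C, H t.1 t.2.1 t.2.2 * F t.2.1 t.2.2 ≤
      ∑ b, ∑ c, π₂₃ b c * F b c := by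
  rw [sum_triple_mul_right]
  refine sum_le_sum fun b _ => sum_le_sum fun c _ => ?_
  by_cases hbc : b = none ∧ c = none
  · simp [hbc.1, hbc.2, hF₀]
  · exact mul_le_mul_of_nonneg_right (hH.sum_left_le b c hbc) (hF b c)

end IsAdmissibleGluing

end ThreePlans

section Gluing

variable {A B C : Type*} [Fintype B]

theorem IsCoupling.exists_isGluing [Fintype A] [Fintype C] {μ₁ : A → ℝ} {μ₂ : B → ℝ}
    {μ₃ : C → ℝ} {π₁₂ : A → B → ℝ} {π₂₃ : B → C → ℝ} (h₁₂ : IsCoupling μ₁ μ₂ π₁₂)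
    (h₂₃ : IsCoupling μ₂ μ₃ π₂₃) (hμ₂ : ∀ b, μ₂ b ≠ 0) : ∃ G, IsGluing π₁₂ π₂₃ G := by
  refine ⟨fun a b c => π₁₂ a b * π₂₃ b c / μ₂ b, ⟨fun a b c => ?_, fun a b => ?_, fun b c => ?_⟩⟩
  · have hμ : 0 ≤ μ₂ b := h₂₃.2.1 b ▸ sum_nonneg fun c _ => h₂₃.1 b c
    exact div_nonneg (mul_nonneg (h₁₂.1 a b) (h₂₃.1 b c)) hμ
  · rw [← sum_div, ← mul_sum, h₂₃.2.1 b, mul_div_cancel_right₀ _ (hμ₂ b)]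
  · rw [← sum_div, ← sum_mul, h₁₂.2.2 b, mul_div_cancel_left₀ _ (hμ₂ b)]

noncomputable def glueAdmissible (ν : B → ℝ) (π₁₂ : Option A → Option B → ℝ)
    (π₂₃ : Option B → Option C → ℝ) : Option A → Option B → Option C → ℝ
  | some a, some b, c => π₁₂ (some a) (some b) * π₂₃ (some b) c / ν b
  | none, some b, some c => π₁₂ none (some b) * π₂₃ (some b) (some c) / ν b
  | none, some _, none => 0
  | some a, none, none => π₁₂ (some a) none
  | none, none, some c => π₂₃ none (some c)
  | some _, none, some _ => 0
  | none, none, none => 0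

variable {ν₁ : A → ℝ} {ν₂ : B → ℝ} {ν₃ : C → ℝ} {π₁₂ : Option A → Option B → ℝ}
  {π₂₃ : Option B → Option C → ℝ}

lemma glueAdmissible_nonneg [Fintype A] [Fintype C] (h₁₂ : IsAdmissible ν₁ ν₂ π₁₂)
    (h₂₃ : IsAdmissible ν₂ ν₃ π₂₃) (a : Option A) (b : Option B) (c : Option C) :
    0 ≤ glueAdmissible ν₂ π₁₂ π₂₃ a b c := by
  have hν : ∀ b, 0 ≤ ν₂ b := fun b => h₂₃.2.1 b ▸ sum_nonneg fun c _ => h₂₃.1 _ c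
  rcases a with _ | a <;> rcases b with _ | b <;> rcases c with _ | c <;>
    simp only [glueAdmissible] <;>
    first
      | exact le_rfl
      | exact div_nonneg (mul_nonneg (h₁₂.1 _ _) (h₂₃.1 _ _)) (hν _)
      | exact h₁₂.1 _ _
      | exact h₂₃.1 _ _

lemma sum_glueAdmissible_some_left [Fintype C] (h₂₃ : IsAdmissible ν₂ ν₃ π₂₃) (hν₂ : ∀ b, ν₂ b ≠ 0)
    (a : A) (b : Option B) : ∑ c, glueAdmissible ν₂ π₁₂ π₂₃ (some a) b c = π₁₂ (some a) b := by
  rcases b with _ | b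
  · simp [Fintype.sum_option, glueAdmissible]
  · simp only [glueAdmissible]
    rw [← sum_div, ← mul_sum, h₂₃.2.1 b, mul_div_cancel_right₀ _ (hν₂ b)]

lemma sum_glueAdmissible_some_right [Fintype A] (h₁₂ : IsAdmissible ν₁ ν₂ π₁₂) (hν₂ : ∀ b, ν₂ b ≠ 0)
    (b : Option B) (c : C) : ∑ a, glueAdmissible ν₂ π₁₂ π₂₃ a b (some c) = π₂₃ b (some c) := by
  rcases b with _ | b
  · simp [Fintype.sum_option, glueAdmissible]
  · simp only [Fintype.sum_option, glueAdmissible]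
    rw [← Fintype.sum_option (fun a => π₁₂ a (some b) * π₂₃ (some b) (some c) / ν₂ b),
      ← sum_div, ← sum_mul, h₁₂.2.2.1 b, mul_div_cancel_left₀ _ (hν₂ b)]

lemma sum_glueAdmissible_none_some_le [Fintype A] [Fintype C] (h₁₂ : IsAdmissible ν₁ ν₂ π₁₂)
    (h₂₃ : IsAdmissible ν₂ ν₃ π₂₃) (hν₂ : ∀ b, ν₂ b ≠ 0) (b : B) :
    ∑ c, glueAdmissible ν₂ π₁₂ π₂₃ none (some b) c ≤ π₁₂ none (some b) := by
  have hsum : ∑ c : C, π₂₃ (some b) (some c) ≤ ν₂ b := by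
    rw [← h₂₃.2.1 b, Fintype.sum_option]
    exact le_add_of_nonneg_left (h₂₃.1 _ _)
  have hν : 0 ≤ ν₂ b := (sum_nonneg fun c _ => h₂₃.1 _ _).trans hsum
  simp only [Fintype.sum_option, glueAdmissible, zero_add]
  rw [← sum_div, ← mul_sum]
  calc _ ≤ π₁₂ none (some b) * ν₂ b / ν₂ b :=
        div_le_div_of_nonneg_right (mul_le_mul_of_nonneg_left hsum (h₁₂.1 _ _)) hν
    _ = π₁₂ none (some b) := mul_div_cancel_right₀ _ (hν₂ b)

lemma sum_glueAdmissible_some_none_le [Fintype A] [Fintype C] (h₁₂ : IsAdmissible ν₁ ν₂ π₁₂)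
    (h₂₃ : IsAdmissible ν₂ ν₃ π₂₃) (hν₂ : ∀ b, ν₂ b ≠ 0) (b : B) :
    ∑ a, glueAdmissible ν₂ π₁₂ π₂₃ a (some b) none ≤ π₂₃ (some b) none := by
  have hsum : ∑ a : A, π₁₂ (some a) (some b) ≤ ν₂ b := by
    rw [← h₁₂.2.2.1 b, Fintype.sum_option]
    exact le_add_of_nonneg_left (h₁₂.1 _ _)
  have hν : 0 ≤ ν₂ b := (sum_nonneg fun a _ => h₁₂.1 _ _).trans hsum
  simp only [Fintype.sum_option, glueAdmissible, zero_add]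
  rw [← sum_div, ← sum_mul]
  calc _ ≤ ν₂ b * π₂₃ (some b) none / ν₂ b :=
        div_le_div_of_nonneg_right (mul_le_mul_of_nonneg_right hsum (h₂₃.1 _ _)) hν
    _ = π₂₃ (some b) none := mul_div_cancel_left₀ _ (hν₂ b)

theorem IsAdmissible.exists_isAdmissibleGluing [Fintype A] [Fintype C]
    (h₁₂ : IsAdmissible ν₁ ν₂ π₁₂) (h₂₃ : IsAdmissible ν₂ ν₃ π₂₃) (hν₂ : ∀ b, ν₂ b ≠ 0) :
    ∃ H, IsAdmissibleGluing π₁₂ π₂₃ H ∧ IsAdmissible ν₁ ν₃ (fun a c => ∑ b, H a b c) := by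
  refine ⟨glueAdmissible ν₂ π₁₂ π₂₃, ⟨glueAdmissible_nonneg h₁₂ h₂₃, fun a b hab => ?_,
    fun b c hbc => ?_, fun _ _ => rfl⟩, fun a c => sum_nonneg fun b _ =>
    glueAdmissible_nonneg h₁₂ h₂₃ a b c, fun a => ?_, fun c => ?_,
    by simp [Fintype.sum_option, glueAdmissible]⟩
  · rcases a with _ | a
    · obtain ⟨b, rfl⟩ := Option.ne_none_iff_exists'.1 fun hb => hab ⟨rfl, hb⟩
      exact sum_glueAdmissible_none_some_le h₁₂ h₂₃ hν₂ b
    · exact (sum_glueAdmissible_some_left h₂₃ hν₂ a b).le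
  · rcases c with _ | c
    · obtain ⟨b, rfl⟩ := Option.ne_none_iff_exists'.1 fun hb => hbc ⟨hb, rfl⟩
      exact sum_glueAdmissible_some_none_le h₁₂ h₂₃ hν₂ b
    · exact (sum_glueAdmissible_some_right h₁₂ hν₂ b c).le
  · rw [sum_comm, ← h₁₂.2.1 a]
    exact sum_congr rfl fun b _ => sum_glueAdmissible_some_left h₂₃ hν₂ a b
  · rw [sum_comm, ← h₂₃.2.2.1 c]
    exact sum_congr rfl fun b _ => sum_glueAdmissible_some_right h₁₂ hν₂ b c

end Gluing

section Triangle

variable {p : ℝ} {T U A B : Type*} [Fintype T] [Fintype U] [Fintype A] [Fintype B]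

lemma sum_mul_mul_eq_gwTerm {W : T → ℝ} {u : T → A} {v : T → B} {π : A → B → ℝ}
    (hW : ∀ F : A → B → ℝ, ∑ t, W t * F (u t) (v t) = ∑ a, ∑ b, π a b * F a b)
    (k : A → A → ℝ) (k' : B → B → ℝ) :
    ∑ q : T × T, W q.1 * W q.2 * |k (u q.1) (u q.2) - k' (v q.1) (v q.2)| ^ p =
      gwTerm p k k' π := by
  rw [gwTerm_eq, ← hW]
  simp only [Fintype.sum_prod_type, mul_assoc, ← mul_sum]
  exact sum_congr rfl fun t _ => congrArg (W t * ·) (hW fun a b => |k (u t) a - k' (v t) b| ^ p)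

lemma sum_mul_mul_eq_coTerm {A' B' : Type*} [Fintype A'] [Fintype B'] {W : T → ℝ} {u : T → A}
    {v : T → B} {πv : A → B → ℝ} {V : U → ℝ} {u' : U → Option A'} {v' : U → Option B'}
    {πe : Option A' → Option B' → ℝ}
    (hW : ∀ F : A → B → ℝ, ∑ t, W t * F (u t) (v t) = ∑ a, ∑ b, πv a b * F a b)
    (hV : ∀ F : Option A' → Option B' → ℝ, ∑ s, V s * F (u' s) (v' s) = ∑ a, ∑ b, πe a b * F a b)
    (ω : A → A' → ℝ) (ω' : B → B' → ℝ) :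
    ∑ q : T × U, W q.1 * V q.2 * |ωbar ω (u q.1) (u' q.2) - ωbar ω' (v q.1) (v' q.2)| ^ p =
      coTerm p ω ω' πv πe := by
  rw [coTerm_eq, ← hW]
  simp only [Fintype.sum_prod_type, mul_assoc, ← mul_sum]
  exact sum_congr rfl fun t _ =>
    congrArg (W t * ·) (hV fun a b => |ωbar ω (u t) a - ωbar ω' (v t) b| ^ p)

lemma sum_mul_mul_le_coTerm {A' B' : Type*} [Fintype A'] [Fintype B'] {W : T → ℝ} {u : T → A}
    {v : T → B} {πv : A → B → ℝ} {V : U → ℝ} {u' : U → Option A'} {v' : U → Option B'}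
    {πe : Option A' → Option B' → ℝ} (hp : p ≠ 0) (hW₀ : ∀ t, 0 ≤ W t)
    (hW : ∀ F : A → B → ℝ, ∑ t, W t * F (u t) (v t) = ∑ a, ∑ b, πv a b * F a b)
    (hV : ∀ F : Option A' → Option B' → ℝ, (∀ a b, 0 ≤ F a b) → F none none = 0 →
      ∑ s, V s * F (u' s) (v' s) ≤ ∑ a, ∑ b, πe a b * F a b)
    (ω : A → A' → ℝ) (ω' : B → B' → ℝ) :
    ∑ q : T × U, W q.1 * V q.2 * |ωbar ω (u q.1) (u' q.2) - ωbar ω' (v q.1) (v' q.2)| ^ p ≤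
      coTerm p ω ω' πv πe := by
  rw [coTerm_eq, ← hW]
  simp only [Fintype.sum_prod_type, mul_assoc, ← mul_sum]
  refine sum_le_sum fun t _ => mul_le_mul_of_nonneg_left
    (hV (fun a b => |ωbar ω (u t) a - ωbar ω' (v t) b| ^ p) (fun _ _ => ?_) ?_) (hW₀ t)
  · positivity
  · simp [ωbar, Real.zero_rpow hp]

theorem gwTerm_le_of_isGluing {X₁ X₂ X₃ : Type*} [Fintype X₁] [Fintype X₂] [Fintype X₃]
    (hp : 1 ≤ p) {π₁₂ : X₁ → X₂ → ℝ} {π₂₃ : X₂ → X₃ → ℝ} {G : X₁ → X₂ → X₃ → ℝ}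
    (hG : IsGluing π₁₂ π₂₃ G) (k₁ : X₁ → X₁ → ℝ) (k₂ : X₂ → X₂ → ℝ) (k₃ : X₃ → X₃ → ℝ) :
    gwTerm p k₁ k₃ (fun a c => ∑ b, G a b c) ^ (1 / p) ≤
      gwTerm p k₁ k₂ π₁₂ ^ (1 / p) + gwTerm p k₂ k₃ π₂₃ ^ (1 / p) := by
  rw [← sum_mul_mul_eq_gwTerm (sum_triple_mul_outer G) k₁ k₃,
    ← sum_mul_mul_eq_gwTerm hG.sum_mul_left k₁ k₂, ← sum_mul_mul_eq_gwTerm hG.sum_mul_right k₂ k₃]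
  simpa only [sub_add_sub_cancel] using weighted_Lp_add_le hp _
    (fun q : (X₁ × X₂ × X₃) × (X₁ × X₂ × X₃) => k₁ q.1.1 q.2.1 - k₂ q.1.2.1 q.2.2.1)
    (fun q => k₂ q.1.2.1 q.2.2.1 - k₃ q.1.2.2 q.2.2.2)
    (fun q => mul_nonneg (hG.nonneg _ _ _) (hG.nonneg _ _ _))

theorem coTerm_le_of_isGluing {X₁ X₂ X₃ Y₁ Y₂ Y₃ : Type*} [Fintype X₁] [Fintype X₂] [Fintype X₃]
    [Fintype Y₁] [Fintype Y₂] [Fintype Y₃] (hp : 1 ≤ p) {πv₁₂ : X₁ → X₂ → ℝ}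
    {πv₂₃ : X₂ → X₃ → ℝ} {G : X₁ → X₂ → X₃ → ℝ} {πe₁₂ : Option Y₁ → Option Y₂ → ℝ}
    {πe₂₃ : Option Y₂ → Option Y₃ → ℝ} {H : Option Y₁ → Option Y₂ → Option Y₃ → ℝ}
    (hG : IsGluing πv₁₂ πv₂₃ G) (hH : IsAdmissibleGluing πe₁₂ πe₂₃ H)
    (ω₁ : X₁ → Y₁ → ℝ) (ω₂ : X₂ → Y₂ → ℝ) (ω₃ : X₃ → Y₃ → ℝ) :
    coTerm p ω₁ ω₃ (fun a c => ∑ b, G a b c) (fun a c => ∑ b, H a b c) ^ (1 / p) ≤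
      coTerm p ω₁ ω₂ πv₁₂ πe₁₂ ^ (1 / p) + coTerm p ω₂ ω₃ πv₂₃ πe₂₃ ^ (1 / p) := by
  have hp₀ : p ≠ 0 := (zero_lt_one.trans_le hp).ne'
  have hw : ∀ q : (X₁ × X₂ × X₃) × (Option Y₁ × Option Y₂ × Option Y₃),
      0 ≤ G q.1.1 q.1.2.1 q.1.2.2 * H q.2.1 q.2.2.1 q.2.2.2 :=
    fun q => mul_nonneg (hG.nonneg _ _ _) (hH.nonneg _ _ _)
  have h := weighted_Lp_add_le hp _
    (fun q : (X₁ × X₂ × X₃) × (Option Y₁ × Option Y₂ × Option Y₃) =>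
      ωbar ω₁ q.1.1 q.2.1 - ωbar ω₂ q.1.2.1 q.2.2.1)
    (fun q => ωbar ω₂ q.1.2.1 q.2.2.1 - ωbar ω₃ q.1.2.2 q.2.2.2) hw
  simp only [sub_add_sub_cancel] at h
  rw [← sum_mul_mul_eq_coTerm (sum_triple_mul_outer G) (sum_triple_mul_outer H) ω₁ ω₃]
  refine h.trans (add_le_add (Real.rpow_le_rpow ?_ ?_ ?_) (Real.rpow_le_rpow ?_ ?_ ?_))
  · exact sum_nonneg fun q _ => mul_nonneg (hw q) (by positivity)
  · exact sum_mul_mul_le_coTerm hp₀ (fun t => hG.nonneg _ _ _) hG.sum_mul_left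
      hH.sum_mul_left_le ω₁ ω₂
  · exact one_div_nonneg.2 (zero_le_one.trans hp)
  · exact sum_nonneg fun q _ => mul_nonneg (hw q) (by positivity)
  · exact sum_mul_mul_le_coTerm hp₀ (fun t => hG.nonneg _ _ _) hG.sum_mul_right
      hH.sum_mul_right_le ω₂ ω₃
  · exact one_div_nonneg.2 (zero_le_one.trans hp)

theorem pdTerm_le_of_isAdmissibleGluing {Y₁ Y₂ Y₃ : Type*} [Fintype Y₁] [Fintype Y₂]
    [Fintype Y₃] (hp : 1 ≤ p) {π₁₂ : Option Y₁ → Option Y₂ → ℝ}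
    {π₂₃ : Option Y₂ → Option Y₃ → ℝ} {H : Option Y₁ → Option Y₂ → Option Y₃ → ℝ}
    (hH : IsAdmissibleGluing π₁₂ π₂₃ H) (ι₁ : Y₁ → ℝ × ℝ) (ι₂ : Y₂ → ℝ × ℝ) (ι₃ : Y₃ → ℝ × ℝ) :
    pdTerm p ι₁ ι₃ (fun a c => ∑ b, H a b c) ^ (1 / p) ≤
      pdTerm p ι₁ ι₂ π₁₂ ^ (1 / p) + pdTerm p ι₂ ι₃ π₂₃ ^ (1 / p) := by
  have hp₀ : p ≠ 0 := (zero_lt_one.trans_le hp).ne'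
  have hp' : 0 ≤ 1 / p := one_div_nonneg.2 (zero_le_one.trans hp)
  let R (u : Option Y₁ × Option Y₂ × Option Y₃) := pdRealize ι₁ ι₂ ι₃ u.1 u.2.1 u.2.2
  have hsum : ∀ x y : Option Y₁ × Option Y₂ × Option Y₃ → ℝ × ℝ,
      0 ≤ ∑ u, H u.1 u.2.1 u.2.2 * lpp p (x u) (y u) :=
    fun x y => sum_nonneg fun u _ => mul_nonneg (hH.nonneg _ _ _) (lpp_nonneg _ _ _)
  have h₁₃ : pdTerm p ι₁ ι₃ (fun a c => ∑ b, H a b c) ≤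
      ∑ u, H u.1 u.2.1 u.2.2 * lpp p (R u).1 (R u).2.2 := by
    calc pdTerm p ι₁ ι₃ (fun a c => ∑ b, H a b c)
        = ∑ u : Option Y₁ × Option Y₂ × Option Y₃,
            H u.1 u.2.1 u.2.2 * pdCost p ι₁ ι₃ u.1 u.2.2 := by
          rw [sum_triple_mul_outer]
          exact sum_congr rfl fun _ _ => sum_congr rfl fun _ _ => mul_comm _ _
      _ ≤ _ := sum_le_sum fun u _ => mul_le_mul_of_nonneg_left
          (pdCost_le_lpp_pdRealize ι₁ ι₂ ι₃ hp _ _ _) (hH.nonneg _ _ _)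
  have h₁₂ : ∑ u, H u.1 u.2.1 u.2.2 * lpp p (R u).1 (R u).2.1 ≤ pdTerm p ι₁ ι₂ π₁₂ := by
    simp only [R, lpp_pdRealize_fst_snd ι₁ ι₂ ι₃ hp₀]
    refine (hH.sum_mul_left_le _ (pdCost_nonneg p ι₁ ι₂) rfl).trans_eq ?_
    exact sum_congr rfl fun _ _ => sum_congr rfl fun _ _ => mul_comm _ _
  have h₂₃ : ∑ u, H u.1 u.2.1 u.2.2 * lpp p (R u).2.1 (R u).2.2 ≤ pdTerm p ι₂ ι₃ π₂₃ := by
    calc ∑ u, H u.1 u.2.1 u.2.2 * lpp p (R u).2.1 (R u).2.2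
        = ∑ u : Option Y₁ × Option Y₂ × Option Y₃,
            H u.1 u.2.1 u.2.2 * pdCost p ι₂ ι₃ u.2.1 u.2.2 := by
          refine sum_congr rfl fun ⟨a, b, c⟩ _ => ?_
          by_cases h : a ≠ none ∧ b = none ∧ c ≠ none
          · obtain ⟨⟨a, rfl⟩, rfl, ⟨c, rfl⟩⟩ :=
              And.imp Option.ne_none_iff_exists'.1 (And.imp_right Option.ne_none_iff_exists'.1) h
            simp [hH.some_none_some]
          · rw [lpp_pdRealize_snd_thd ι₁ ι₂ ι₃ hp₀ h]
      _ ≤ ∑ b, ∑ c, π₂₃ b c * pdCost p ι₂ ι₃ b c :=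
          hH.sum_mul_right_le _ (pdCost_nonneg p ι₂ ι₃) rfl
      _ = pdTerm p ι₂ ι₃ π₂₃ := sum_congr rfl fun _ _ => sum_congr rfl fun _ _ => mul_comm _ _
  calc pdTerm p ι₁ ι₃ (fun a c => ∑ b, H a b c) ^ (1 / p)
      ≤ (∑ u, H u.1 u.2.1 u.2.2 * lpp p (R u).1 (R u).2.2) ^ (1 / p) :=
        Real.rpow_le_rpow (pdTerm_nonneg ι₁ ι₃ fun a c => sum_nonneg fun b _ => hH.nonneg a b c)
          h₁₃ hp'
    _ ≤ (∑ u, H u.1 u.2.1 u.2.2 * lpp p (R u).1 (R u).2.1) ^ (1 / p) +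
          (∑ u, H u.1 u.2.1 u.2.2 * lpp p (R u).2.1 (R u).2.2) ^ (1 / p) :=
        weighted_lpp_triangle hp _ (fun u => hH.nonneg _ _ _) _ _ _
    _ ≤ pdTerm p ι₁ ι₂ π₁₂ ^ (1 / p) + pdTerm p ι₂ ι₃ π₂₃ ^ (1 / p) :=
        add_le_add (Real.rpow_le_rpow (hsum _ _) h₁₂ hp') (Real.rpow_le_rpow (hsum _ _) h₂₃ hp')

end Triangle

theorem tpotObj_le_of_isGluing {p : ℝ} (hp : 1 ≤ p) {P₁ P₂ P₃ : FinTopNet}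
    {πv₁₂ : P₁.X → P₂.X → ℝ} {πv₂₃ : P₂.X → P₃.X → ℝ} {G : P₁.X → P₂.X → P₃.X → ℝ}
    {πe₁₂ : Option P₁.Y → Option P₂.Y → ℝ} {πe₂₃ : Option P₂.Y → Option P₃.Y → ℝ}
    {H : Option P₁.Y → Option P₂.Y → Option P₃.Y → ℝ}
    (hG : IsGluing πv₁₂ πv₂₃ G) (hH : IsAdmissibleGluing πe₁₂ πe₂₃ H)
    (he₁₂ : ∀ a b, 0 ≤ πe₁₂ a b) (he₂₃ : ∀ b c, 0 ≤ πe₂₃ b c) :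
    tpotObj p P₁ P₃ (fun a c => ∑ b, G a b c) (fun a c => ∑ b, H a b c) ^ (1 / p) ≤
      tpotObj p P₁ P₂ πv₁₂ πe₁₂ ^ (1 / p) + tpotObj p P₂ P₃ πv₂₃ πe₂₃ ^ (1 / p) := by
  have hv₁₂ : ∀ a b, 0 ≤ πv₁₂ a b := fun a b =>
    hG.sum_right a b ▸ sum_nonneg fun c _ => hG.nonneg a b c
  have hv₂₃ : ∀ b c, 0 ≤ πv₂₃ b c := fun b c =>
    hG.sum_left b c ▸ sum_nonneg fun a _ => hG.nonneg a b c
  have hv₁₃ : ∀ a c, 0 ≤ ∑ b, G a b c := fun a c => sum_nonneg fun b _ => hG.nonneg a b c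
  have he₁₃ : ∀ a c, 0 ≤ ∑ b, H a b c := fun a c => sum_nonneg fun b _ => hH.nonneg a b c
  have h := rpow_one_div_sum_le_add_of_forall_le hp univ
    (a := ![pdTerm p P₁.ι P₂.ι πe₁₂, gwTerm p P₁.k P₂.k πv₁₂, coTerm p P₁.ω P₂.ω πv₁₂ πe₁₂])
    (b := ![pdTerm p P₂.ι P₃.ι πe₂₃, gwTerm p P₂.k P₃.k πv₂₃, coTerm p P₂.ω P₃.ω πv₂₃ πe₂₃])
    (c := ![pdTerm p P₁.ι P₃.ι (fun a c => ∑ b, H a b c),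
      gwTerm p P₁.k P₃.k (fun a c => ∑ b, G a b c),
      coTerm p P₁.ω P₃.ω (fun a c => ∑ b, G a b c) (fun a c => ∑ b, H a b c)])
    (fun i _ => by
      fin_cases i
      exacts [pdTerm_nonneg _ _ he₁₂, gwTerm_nonneg _ _ hv₁₂, coTerm_nonneg _ _ hv₁₂ he₁₂])
    (fun i _ => by
      fin_cases i
      exacts [pdTerm_nonneg _ _ he₂₃, gwTerm_nonneg _ _ hv₂₃, coTerm_nonneg _ _ hv₂₃ he₂₃])
    (fun i _ => by
      fin_cases i
      exacts [pdTerm_nonneg _ _ he₁₃, gwTerm_nonneg _ _ hv₁₃, coTerm_nonneg _ _ hv₁₃ he₁₃])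
    (fun i _ => by
      fin_cases i
      exacts [pdTerm_le_of_isAdmissibleGluing hp hH _ _ _, gwTerm_le_of_isGluing hp hG _ _ _,
        coTerm_le_of_isGluing hp hG hH _ _ _])
  simpa only [tpotObj_eq, Fin.sum_univ_three, Matrix.cons_val_zero, Matrix.cons_val_one,
    Matrix.cons_val_two, Matrix.head_cons, Matrix.tail_cons] using h

lemma isCoupling_mul {A B : Type*} [Fintype A] [Fintype B] {μ : A → ℝ} {μ' : B → ℝ}
    (hμ : ∀ a, 0 ≤ μ a) (hμ' : ∀ b, 0 ≤ μ' b) (h₁ : ∑ a, μ a = 1) (h₁' : ∑ b, μ' b = 1) :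
    IsCoupling μ μ' (fun a b => μ a * μ' b) :=
  ⟨fun a b => mul_nonneg (hμ a) (hμ' b), fun a => by rw [← mul_sum, h₁', mul_one],
    fun b => by rw [← sum_mul, h₁, one_mul]⟩

lemma exists_isAdmissible {Y Y' : Type*} [Fintype Y] [Fintype Y'] {ν : Y → ℝ} {ν' : Y' → ℝ}
    (hν : ∀ y, 0 ≤ ν y) (hν' : ∀ y', 0 ≤ ν' y') : ∃ πe, IsAdmissible ν ν' πe := by
  refine ⟨fun y y' => match y, y' with
    | some y, none => ν y
    | none, some y' => ν' y'
    | _, _ => 0, fun y y' => ?_, fun y => ?_, fun y' => ?_, rfl⟩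
  · rcases y with _ | y <;> rcases y' with _ | y'
    exacts [le_rfl, hν' y', hν y, le_rfl]
  · simp [Fintype.sum_option]
  · simp [Fintype.sum_option]

lemma FinTopNet.Valid.exists_isCoupling_isAdmissible {P P' : FinTopNet} (hP : P.Valid)
    (hP' : P'.Valid) : ∃ πv πe, IsCoupling P.μ P'.μ πv ∧ IsAdmissible P.ν P'.ν πe :=
  let ⟨πe, he⟩ := exists_isAdmissible (fun y => (hP.2.2.2 y).le) (fun y => (hP'.2.2.2 y).le)
  ⟨_, πe, isCoupling_mul (fun x => (hP.2.1 x).le) (fun x => (hP'.2.1 x).le) hP.2.2.1 hP'.2.2.1,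
    he⟩

lemma dTpOT_le {p : ℝ} {P P' : FinTopNet} {πv : P.X → P'.X → ℝ}
    {πe : Option P.Y → Option P'.Y → ℝ} (hv : IsCoupling P.μ P'.μ πv)
    (he : IsAdmissible P.ν P'.ν πe) : dTpOT p P P' ≤ tpotObj p P P' πv πe ^ (1 / p) := by
  refine csInf_le ⟨0, ?_⟩ ⟨πv, πe, hv, he, rfl⟩
  rintro _ ⟨πv, πe, hv, he, rfl⟩
  exact Real.rpow_nonneg (tpotObj_nonneg P P' hv.1 he.1) _

lemma le_csInf_add_csInf {s t : Set ℝ} {d : ℝ} (hs : s.Nonempty) (ht : t.Nonempty)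
    (h : ∀ a ∈ s, ∀ b ∈ t, d ≤ a + b) : d ≤ sInf s + sInf t := by
  have hs' : ∀ a ∈ s, d - a ≤ sInf t := fun a ha => le_csInf ht fun b hb => by
    linarith [h a ha b hb]
  have : d - sInf t ≤ sInf s := le_csInf hs fun a ha => by linarith [hs' a ha]
  linarith

/-- Triangle inequality for `d_{TpOT,p}` on finite measure topological networks. -/
theorem stmt_11 (p : ℝ) (hp : 1 ≤ p) (P₁ P₂ P₃ : FinTopNet)
    (h₁ : P₁.Valid) (h₂ : P₂.Valid) (h₃ : P₃.Valid) :
    dTpOT p P₁ P₃ ≤ dTpOT p P₁ P₂ + dTpOT p P₂ P₃ := by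
  refine le_csInf_add_csInf ?_ ?_ ?_
  · obtain ⟨πv, πe, hv, he⟩ := h₁.exists_isCoupling_isAdmissible h₂
    exact ⟨_, πv, πe, hv, he, rfl⟩
  · obtain ⟨πv, πe, hv, he⟩ := h₂.exists_isCoupling_isAdmissible h₃
    exact ⟨_, πv, πe, hv, he, rfl⟩
  rintro _ ⟨πv₁₂, πe₁₂, hv₁₂, he₁₂, rfl⟩ _ ⟨πv₂₃, πe₂₃, hv₂₃, he₂₃, rfl⟩
  obtain ⟨G, hG⟩ := hv₁₂.exists_isGluing hv₂₃ fun x => (h₂.2.1 x).ne'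
  obtain ⟨H, hH, he₁₃⟩ := he₁₂.exists_isAdmissibleGluing he₂₃ fun y => (h₂.2.2.2 y).ne'
  exact (dTpOT_le (hG.isCoupling hv₁₂ hv₂₃) he₁₃).trans
    (tpotObj_le_of_isGluing hp hG hH he₁₂.1 he₂₃.1)
end

section
/- Weak isomorphism of measure topological networks is an equivalence relation: the relation P ∼_w P', defined by the existence of a third network P̄ with weak isomorphisms from P̄ to both P and P', is reflexive, symmetric, and transitive on the class of finite measure topological networks. -/
open Finset

open scoped Classical

/-- A weak isomorphism from `Q` to `P`: measure-preserving maps intertwining the gauge,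
persistence and incidence data. -/
def IsWeakIso (Q P : FinTopNet) (φ : Q.X → P.X) (ψ : Q.Y → P.Y) : Prop :=
  (∀ x : P.X, P.μ x = ∑ a ∈ Finset.univ.filter (fun a => φ a = x), Q.μ a) ∧
  (∀ y : P.Y, P.ν y = ∑ b ∈ Finset.univ.filter (fun b => ψ b = y), Q.ν b) ∧
  (∀ y, Q.ι y = P.ι (ψ y)) ∧
  (∀ x y, Q.ω x y = P.ω (φ x) (ψ y)) ∧
  (∀ x₁ x₂, Q.k x₁ x₂ = P.k (φ x₁) (φ x₂))

/-- `P ∼_w P'`: there is a third network with weak isomorphisms onto both `P` and `P'`. -/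
def WeaklyIsomorphic (P P' : {P : FinTopNet // P.Valid}) : Prop :=
  ∃ Q : FinTopNet, Q.Valid ∧
    (∃ φ ψ, IsWeakIso Q P.1 φ ψ) ∧ (∃ φ' ψ', IsWeakIso Q P'.1 φ' ψ')

/-!
Reflexivity and symmetry are immediate. For transitivity, weak isomorphisms compose, so it
suffices to close a cospan `Q → P' ← R` of weak isomorphisms into a commuting square. The
fiber product of `Q` and `R` over `P'` does this when its points `(a, b)` with `φ a = θ b = c`
carry the relatively independent coupling `μ_Q a * μ_R b / μ_{P'} c`: since `μ_{P'}` is the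
pushforward of both `μ_Q` and `μ_R` and has full support, the two projections are again
measure preserving, and all other data are pulled back from `Q`.
-/

def IsPushforward {A B : Type*} [Fintype A] (f : A → B) (μ : A → ℝ) (ν : B → ℝ) : Prop :=
  ∀ b, ν b = ∑ a ∈ univ.filter (fun a => f a = b), μ a

namespace IsPushforward

variable {A B C : Type*} [Fintype A] [Fintype B] {μ : A → ℝ} {ν : B → ℝ} {f : A → B}

lemma id (μ : A → ℝ) : IsPushforward id μ μ := by
  intro a
  simp [Finset.sum_filter]

lemma comp {ρ : C → ℝ} {g : B → C} (hg : IsPushforward g ν ρ) (hf : IsPushforward f μ ν) :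
    IsPushforward (g ∘ f) μ ρ := by
  intro c
  calc ρ c = ∑ b ∈ univ.filter (fun b => g b = c), ∑ a ∈ univ.filter (fun a => f a = b), μ a :=
        (hg c).trans (sum_congr rfl fun b _ => hf b)
    _ = ∑ a ∈ univ.filter (fun a => f a ∈ univ.filter (fun b => g b = c)), μ a :=
        sum_fiberwise_eq_sum_filter _ _ _ _
    _ = ∑ a ∈ univ.filter (fun a => (g ∘ f) a = c), μ a := by simp

lemma sum_eq (hf : IsPushforward f μ ν) : ∑ b, ν b = ∑ a, μ a :=
  (sum_congr rfl fun b _ => hf b).trans (sum_fiberwise _ _ _)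

end IsPushforward

section FiberProduct

variable {A B C : Type*} [Fintype A] [Fintype B] (e : A → C) (t : B → C)

lemma sum_filter_fiberProd_fst (F : A → B → ℝ) (a : A) :
    ∑ s ∈ univ.filter (fun s : {p : A × B // e p.1 = t p.2} => s.1.1 = a), F s.1.1 s.1.2 =
      ∑ b ∈ univ.filter (fun b => t b = e a), F a b := by
  refine sum_bij (fun s _ => s.1.2) ?_ ?_ ?_ ?_
  · rintro ⟨⟨a', b⟩, h⟩ hs
    simp only [mem_filter_univ] at hs ⊢
    rw [← h, hs]
  · rintro ⟨⟨a₁, b₁⟩, h₁⟩ hs₁ ⟨⟨a₂, b₂⟩, h₂⟩ hs₂ hb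
    simp only [mem_filter_univ] at hs₁ hs₂ hb
    subst hs₁ hs₂ hb
    rfl
  · intro b hb
    simp only [mem_filter_univ] at hb
    exact ⟨⟨(a, b), hb.symm⟩, by simp, rfl⟩
  · rintro ⟨⟨a', b⟩, h⟩ hs
    simp only [mem_filter_univ] at hs
    subst hs
    rfl

lemma sum_filter_fiberProd_snd (F : A → B → ℝ) (b : B) :
    ∑ s ∈ univ.filter (fun s : {p : A × B // e p.1 = t p.2} => s.1.2 = b), F s.1.1 s.1.2 =
      ∑ a ∈ univ.filter (fun a => e a = t b), F a b := by
  refine sum_bij (fun s _ => s.1.1) ?_ ?_ ?_ ?_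
  · rintro ⟨⟨a, b'⟩, h⟩ hs
    simp only [mem_filter_univ] at hs ⊢
    rw [h, hs]
  · rintro ⟨⟨a₁, b₁⟩, h₁⟩ hs₁ ⟨⟨a₂, b₂⟩, h₂⟩ hs₂ ha
    simp only [mem_filter_univ] at hs₁ hs₂ ha
    subst hs₁ hs₂ ha
    rfl
  · intro a ha
    simp only [mem_filter_univ] at ha
    exact ⟨⟨(a, b), ha⟩, by simp, rfl⟩
  · rintro ⟨⟨a, b'⟩, h⟩ hs
    simp only [mem_filter_univ] at hs
    subst hs
    rfl

noncomputable def fiberProdWeight (μA : A → ℝ) (μB : B → ℝ) (m : C → ℝ) :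
    {p : A × B // e p.1 = t p.2} → ℝ :=
  fun s => μA s.1.1 * μB s.1.2 / m (e s.1.1)

variable {e t} {μA : A → ℝ} {μB : B → ℝ} {m : C → ℝ}

lemma isPushforward_fiberProdWeight_fst (hB : IsPushforward t μB m) (hm : ∀ c, m c ≠ 0) :
    IsPushforward (fun s => s.1.1) (fiberProdWeight e t μA μB m) μA := by
  intro a
  calc μA a = μA a / m (e a) * ∑ b ∈ univ.filter (fun b => t b = e a), μB b := by
        rw [← hB, div_mul_cancel₀ _ (hm _)]
    _ = ∑ b ∈ univ.filter (fun b => t b = e a), μA a * μB b / m (e a) := by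
        rw [mul_sum]
        exact sum_congr rfl fun b _ => by ring
    _ = _ := (sum_filter_fiberProd_fst e t (fun a b => μA a * μB b / m (e a)) a).symm

lemma isPushforward_fiberProdWeight_snd (hA : IsPushforward e μA m) (hm : ∀ c, m c ≠ 0) :
    IsPushforward (fun s => s.1.2) (fiberProdWeight e t μA μB m) μB := by
  intro b
  calc μB b = μB b / m (t b) * ∑ a ∈ univ.filter (fun a => e a = t b), μA a := by
        rw [← hA, div_mul_cancel₀ _ (hm _)]
    _ = ∑ a ∈ univ.filter (fun a => e a = t b), μA a * μB b / m (e a) := by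
        rw [mul_sum]
        refine sum_congr rfl fun a ha => ?_
        rw [(mem_filter_univ a).1 ha]
        ring
    _ = _ := (sum_filter_fiberProd_snd e t (fun a b => μA a * μB b / m (e a)) b).symm

end FiberProduct

namespace IsWeakIso

lemma refl (P : FinTopNet) : IsWeakIso P P id id :=
  ⟨IsPushforward.id _, IsPushforward.id _, fun _ => rfl, fun _ _ => rfl, fun _ _ => rfl⟩

lemma comp {R Q P : FinTopNet} {φ : R.X → Q.X} {ψ : R.Y → Q.Y} {φ' : Q.X → P.X}
    {ψ' : Q.Y → P.Y} (h : IsWeakIso R Q φ ψ) (h' : IsWeakIso Q P φ' ψ') :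
    IsWeakIso R P (φ' ∘ φ) (ψ' ∘ ψ) := by
  obtain ⟨hμ, hν, hι, hω, hk⟩ := h
  obtain ⟨hμ', hν', hι', hω', hk'⟩ := h'
  exact ⟨IsPushforward.comp hμ' hμ, IsPushforward.comp hν' hν, fun y => (hι y).trans (hι' _),
    fun x y => (hω x y).trans (hω' _ _), fun x₁ x₂ => (hk x₁ x₂).trans (hk' _ _)⟩

end IsWeakIso

namespace FinTopNet

noncomputable def fiberProd (Q R P : FinTopNet) (φ : Q.X → P.X) (ψ : Q.Y → P.Y) (θ : R.X → P.X)
    (σ : R.Y → P.Y) : FinTopNet where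
  X := {p : Q.X × R.X // φ p.1 = θ p.2}
  Y := {q : Q.Y × R.Y // ψ q.1 = σ q.2}
  k s t := Q.k s.1.1 t.1.1
  μ := fiberProdWeight φ θ Q.μ R.μ P.μ
  ι q := Q.ι q.1.1
  ν := fiberProdWeight ψ σ Q.ν R.ν P.ν
  ω s q := Q.ω s.1.1 q.1.1

variable {Q R P : FinTopNet} {φ : Q.X → P.X} {ψ : Q.Y → P.Y} {θ : R.X → P.X} {σ : R.Y → P.Y}

lemma isWeakIso_fiberProd_fst (hR : IsWeakIso R P θ σ) (hμ : ∀ x, 0 < P.μ x)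
    (hν : ∀ y, 0 < P.ν y) :
    IsWeakIso (Q.fiberProd R P φ ψ θ σ) Q (fun s => s.1.1) (fun q => q.1.1) :=
  ⟨isPushforward_fiberProdWeight_fst hR.1 fun x => (hμ x).ne',
    isPushforward_fiberProdWeight_fst hR.2.1 fun y => (hν y).ne',
    fun _ => rfl, fun _ _ => rfl, fun _ _ => rfl⟩

lemma isWeakIso_fiberProd_snd (hQ : IsWeakIso Q P φ ψ) (hR : IsWeakIso R P θ σ)
    (hμ : ∀ x, 0 < P.μ x) (hν : ∀ y, 0 < P.ν y) :
    IsWeakIso (Q.fiberProd R P φ ψ θ σ) R (fun s => s.1.2) (fun q => q.1.2) := by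
  obtain ⟨hQμ, hQν, hQι, hQω, hQk⟩ := hQ
  obtain ⟨-, -, hRι, hRω, hRk⟩ := hR
  refine ⟨isPushforward_fiberProdWeight_snd hQμ fun x => (hμ x).ne',
    isPushforward_fiberProdWeight_snd hQν fun y => (hν y).ne', fun q => ?_, fun s q => ?_,
    fun s t => ?_⟩
  · change Q.ι q.1.1 = R.ι q.1.2
    rw [hQι, q.2, hRι]
  · change Q.ω s.1.1 q.1.1 = R.ω s.1.2 q.1.2
    rw [hQω, s.2, q.2, hRω]
  · change Q.k s.1.1 t.1.1 = R.k s.1.2 t.1.2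
    rw [hQk, s.2, t.2, hRk]

lemma fiberProd_valid (hQ : Q.Valid) (hR : R.Valid) (hRP : IsWeakIso R P θ σ)
    (hμ : ∀ x, 0 < P.μ x) (hν : ∀ y, 0 < P.ν y) : (Q.fiberProd R P φ ψ θ σ).Valid := by
  obtain ⟨hQk, hQμ, hQ1, hQν⟩ := hQ
  obtain ⟨-, hRμ, -, hRν⟩ := hR
  refine ⟨fun s t => hQk _ _, fun s => div_pos (mul_pos (hQμ _) (hRμ _)) (hμ _), ?_,
    fun q => div_pos (mul_pos (hQν _) (hRν _)) (hν _)⟩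
  rw [← IsPushforward.sum_eq (isWeakIso_fiberProd_fst (φ := φ) (ψ := ψ) hRP hμ hν).1, hQ1]

end FinTopNet

/-- Weak isomorphism is an equivalence relation on (valid) finite measure topological
networks. -/
theorem stmt_19 : Equivalence WeaklyIsomorphic := by
  refine ⟨fun P => ⟨P.1, P.2, ⟨id, id, IsWeakIso.refl P.1⟩, ⟨id, id, IsWeakIso.refl P.1⟩⟩,
    fun ⟨Q, hQ, hP, hP'⟩ => ⟨Q, hQ, hP', hP⟩, ?_⟩
  rintro P P' P'' ⟨Q, hQ, ⟨φ, ψ, hQP⟩, ⟨φ', ψ', hQP'⟩⟩ ⟨R, hR, ⟨θ', σ', hRP'⟩, ⟨θ, σ, hRP''⟩⟩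
  obtain ⟨-, hμ, -, hν⟩ := P'.2
  exact ⟨Q.fiberProd R P'.1 φ' ψ' θ' σ', FinTopNet.fiberProd_valid hQ hR hRP' hμ hν,
    ⟨_, _, (FinTopNet.isWeakIso_fiberProd_fst hRP' hμ hν).comp hQP⟩,
    ⟨_, _, (FinTopNet.isWeakIso_fiberProd_snd hQP' hRP' hμ hν).comp hRP''⟩⟩
end
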